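/- arXiv:2502.15453 — 2 statements merged into one kernel-verified Lean document; each statement's English description precedes it below -/
import Mathlib

section
/- Let T be a finite connected simple graph, v a vertex of T, and suppose the transmission of v is minimum among all vertices of T. Then for every vertex u adjacent to v, n_T(u, v) ≤ n_T(v, u), where n_T(x, y) denotes the number of vertices strictly closer to x than to y. -/
/-!
Moving from `v` to an adjacent vertex `u` changes the distance to every vertex by at most one:
it drops by one exactly on the vertices closer to `u`, and grows by one exactly on those closer
to `v`. Hence `Tr(u) - Tr(v) = n(v, u) - n(u, v)`, which is nonnegative when `Tr(v)` is minimal.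
-/

open Finset

namespace SimpleGraph

variable {V : Type*} (G : SimpleGraph V)

noncomputable def transmission [Fintype V] (v : V) : ℕ := ∑ w, G.dist v w

variable {G}

theorem Adj.dist_sub_dist_eq_ite_sub_ite {u v : V} (h : G.Adj u v) (w : V) :
    (G.dist w u : ℤ) - G.dist w v =
      (if G.dist w v < G.dist w u then 1 else 0) - (if G.dist w u < G.dist w v then 1 else 0) := by
  rcases h.diff_dist_adj (u := w) with h | h | h <;> split_ifs <;> omega

theorem Adj.transmission_sub_transmission [Fintype V] {u v : V} (h : G.Adj u v) :
    (G.transmission u : ℤ) - G.transmission v =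
      #{w | G.dist w v < G.dist w u} - #{w | G.dist w u < G.dist w v} := by
  simp only [transmission, dist_comm (u := u), dist_comm (u := v), Nat.cast_sum,
    ← sum_sub_distrib, h.dist_sub_dist_eq_ite_sub_ite]
  rw [sum_sub_distrib, sum_boole, sum_boole]

end SimpleGraph

theorem closer_count_le_of_min_transmission_general {V : Type*} [Fintype V]
    (T : SimpleGraph V)
    (v : V) (hv : ∀ x : V, (∑ w, T.dist v w) ≤ ∑ w, T.dist x w)
    (u : V) (hu : T.Adj u v) :
    {w : V | T.dist w u < T.dist w v}.ncard ≤ {w : V | T.dist w v < T.dist w u}.ncard := by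
  have htr : T.transmission v ≤ T.transmission u := hv u
  have hdiff := hu.transmission_sub_transmission
  simp only [Set.ncard_eq_toFinset_card', Set.toFinset_ofPred]
  omega

/-- If `T` is a finite connected simple graph and `v` has minimum
transmission, then for every vertex `u` adjacent to `v` we have `n_T(u, v) ≤ n_T(v, u)`,
where `n_T(x, y)` is the number of vertices strictly closer to `x` than to `y`. -/
theorem closer_count_le_of_min_transmission {V : Type*} [Fintype V]
    (T : SimpleGraph V) (hT : T.Connected)
    (v : V) (hv : ∀ x : V, (∑ w, T.dist v w) ≤ ∑ w, T.dist x w)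
    (u : V) (hu : T.Adj u v) :
    {w : V | T.dist w u < T.dist w v}.ncard ≤ {w : V | T.dist w v < T.dist w u}.ncard :=
  closer_count_le_of_min_transmission_general T v hv u hu
end

section
/- Let T be a finite rooted tree with root r, let v be a vertex of T and T_v the subtree of T rooted at v. If u₁ and u₂ are two distinct vertices of T_v with d_T(v, u₁) = d_T(v, u₂) and Tr_T(u₁) ≠ Tr_T(u₂), then Tr_{T_v}(u₁) ≠ Tr_{T_v}(u₂), where Tr_S denotes transmission computed within the tree S. -/
open scoped Classical

/-- In a rooted tree `T` with root `r`, the subtree rooted at `v` consists of `v` together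
with all vertices `w` such that `v` lies on the unique path from `r` to `w`. -/
def SimpleGraph.subtreeSet {V : Type*} (T : SimpleGraph V) (r v : V) : Set V :=
  {w | ∀ p : T.Path r w, v ∈ p.1.support}

/-- The transmission of a vertex `u` of the subtree of `T` rooted at `v` (with respect to
root `r`), computed within the subtree, i.e. within the induced subgraph on the subtree. -/
noncomputable def SimpleGraph.subtreeTr {V : Type*} [Fintype V] (T : SimpleGraph V)
    (r v u : V) (hu : u ∈ T.subtreeSet r v) : ℕ :=
  ∑ w : T.subtreeSet r v, (T.induce (T.subtreeSet r v)).dist ⟨u, hu⟩ w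

/-!
Distances between vertices of `T_v` are the same in `T_v` as in `T`, and the path from a
vertex `u` of `T_v` to a vertex `w` outside `T_v` passes through `v`. Hence
`Tr_T(u) = Tr_{T_v}(u) + Σ_{w ∉ T_v} (d(u, v) + d(v, w))`, and for `u₁, u₂` at the same distance
from `v` the correction terms coincide, so equal subtree transmissions would force equal
transmissions in `T`.
-/

namespace SimpleGraph

variable {V : Type*}

section Acyclic

variable {G : SimpleGraph V} (hG : G.IsAcyclic)
include hG

theorem IsAcyclic.length_eq_dist {u w : V} {p : G.Walk u w} (hp : p.IsPath) :
    p.length = G.dist u w := by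
  obtain ⟨q, hq, hlen⟩ := p.reachable.exists_path_of_dist
  rw [← hlen, show p = q from
    congrArg Subtype.val ((hG.subsingleton_path u w).elim ⟨p, hp⟩ ⟨q, hq⟩)]

theorem IsAcyclic.dist_eq_dist_add_dist_of_mem_support {a b c : V} {p : G.Walk a c}
    (hp : p.IsPath) (hb : b ∈ p.support) : G.dist a c = G.dist a b + G.dist b c := by
  rw [← hG.length_eq_dist hp, ← hG.length_eq_dist (hp.takeUntil hb),
    ← hG.length_eq_dist (hp.dropUntil hb), ← Walk.length_append, Walk.take_spec]

theorem IsAcyclic.dist_induce_eq {s : Set V} {u w : s} (h : (G.induce s).Reachable u w) :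
    (G.induce s).dist u w = G.dist u w := by
  obtain ⟨p, hp, hlen⟩ := h.exists_path_of_dist
  rw [← hlen, ← Walk.length_map (Embedding.induce (G := G) s).toHom,
    hG.length_eq_dist (hp.map (Embedding.induce (G := G) s).injective)]
  rfl

end Acyclic

variable {T : SimpleGraph V} (hT : T.IsTree) {r v : V}
include hT

theorem IsTree.mem_subtreeSet_iff_dist_eq {w : V} :
    w ∈ T.subtreeSet r v ↔ T.dist r w = T.dist r v + T.dist v w := by
  constructor
  · intro hw
    obtain ⟨p, hp, -⟩ := hT.connected.exists_path_of_dist r w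
    exact hT.isAcyclic.dist_eq_dist_add_dist_of_mem_support hp (hw ⟨p, hp⟩)
  · intro hdist q
    obtain ⟨p₁, -, hp₁⟩ := hT.connected.exists_path_of_dist r v
    obtain ⟨p₂, -, hp₂⟩ := hT.connected.exists_path_of_dist v w
    have hpath : (p₁.append p₂).IsPath :=
      Walk.isPath_of_length_eq_dist _ (by rw [Walk.length_append, hp₁, hp₂, hdist])
    rw [(hT.isAcyclic.subsingleton_path r w).elim q ⟨_, hpath⟩, Walk.mem_support_append_iff]
    exact Or.inl p₁.end_mem_support

theorem IsTree.mem_subtreeSet_of_mem_support {w x : V} (hw : w ∈ T.subtreeSet r v)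
    {p : T.Walk v w} (hp : p.IsPath) (hx : x ∈ p.support) : x ∈ T.subtreeSet r v := by
  have hvxw := hT.isAcyclic.dist_eq_dist_add_dist_of_mem_support hp hx
  have hrxw := hT.connected.dist_triangle (u := r) (v := x) (w := w)
  have hrvx := hT.connected.dist_triangle (u := r) (v := v) (w := x)
  rw [hT.mem_subtreeSet_iff_dist_eq] at hw ⊢
  omega

theorem IsTree.reachable_induce_subtreeSet {u : V} (hu : u ∈ T.subtreeSet r v) :
    (T.induce (T.subtreeSet r v)).Reachable ⟨v, fun p ↦ p.1.end_mem_support⟩ ⟨u, hu⟩ := by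
  obtain ⟨p, hp, -⟩ := hT.connected.exists_path_of_dist v u
  exact (p.induce _ fun _ ↦ hT.mem_subtreeSet_of_mem_support hu hp).reachable

theorem IsTree.dist_induce_subtreeSet {u w : V} (hu : u ∈ T.subtreeSet r v)
    (hw : w ∈ T.subtreeSet r v) :
    (T.induce (T.subtreeSet r v)).dist ⟨u, hu⟩ ⟨w, hw⟩ = T.dist u w :=
  hT.isAcyclic.dist_induce_eq
    ((hT.reachable_induce_subtreeSet hu).symm.trans (hT.reachable_induce_subtreeSet hw))

theorem IsTree.dist_eq_dist_add_dist_of_notMem_subtreeSet {u w : V}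
    (hu : u ∈ T.subtreeSet r v) (hw : w ∉ T.subtreeSet r v) :
    T.dist u w = T.dist u v + T.dist v w := by
  obtain ⟨q, hq, -⟩ := hT.connected.exists_path_of_dist u w
  refine hT.isAcyclic.dist_eq_dist_add_dist_of_mem_support hq ?_
  by_contra hvq
  obtain ⟨p, hvp⟩ : ∃ p : T.Path r w, v ∉ p.1.support := by
    simpa [subtreeSet] using hw
  -- the walk `r → w → u` avoids `v`, so its bypass is a path `r → u` avoiding `v`
  have hv : v ∉ (p.1.append q.reverse).support := by
    simp [Walk.mem_support_append_iff, hvp, hvq]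
  exact hv (Walk.support_bypass_subset_support _ (hu ⟨_, Walk.bypass_isPath _⟩))

theorem IsTree.sum_dist_eq_subtreeTr_add [Fintype V] {u : V} (hu : u ∈ T.subtreeSet r v) :
    ∑ w, T.dist u w = T.subtreeTr r v u hu +
      ∑ w ∈ (T.subtreeSet r v).toFinsetᶜ, (T.dist u v + T.dist v w) := by
  have hin : T.subtreeTr r v u hu = ∑ w ∈ (T.subtreeSet r v).toFinset, T.dist u w := by
    rw [subtreeTr, ← Finset.sum_set_coe]
    exact Finset.sum_congr rfl fun w _ ↦ hT.dist_induce_subtreeSet hu w.2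
  have hout : ∑ w ∈ (T.subtreeSet r v).toFinsetᶜ, T.dist u w =
      ∑ w ∈ (T.subtreeSet r v).toFinsetᶜ, (T.dist u v + T.dist v w) :=
    Finset.sum_congr rfl fun w hw ↦
      hT.dist_eq_dist_add_dist_of_notMem_subtreeSet hu (by simpa using hw)
  rw [hin, ← hout, Finset.sum_add_sum_compl]

end SimpleGraph

theorem subtree_transmissions_ne_general {V : Type*} [Fintype V]
    (T : SimpleGraph V) (hT : T.IsTree) (r v : V) (u₁ u₂ : V)
    (h₁ : u₁ ∈ T.subtreeSet r v) (h₂ : u₂ ∈ T.subtreeSet r v)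
    (hd : T.dist v u₁ = T.dist v u₂)
    (htr : (∑ w, T.dist u₁ w) ≠ ∑ w, T.dist u₂ w) :
    T.subtreeTr r v u₁ h₁ ≠ T.subtreeTr r v u₂ h₂ := by
  intro heq
  apply htr
  rw [hT.sum_dist_eq_subtreeTr_add h₁, hT.sum_dist_eq_subtreeTr_add h₂, heq,
    SimpleGraph.dist_comm (u := u₁), hd, SimpleGraph.dist_comm (u := v)]

/-- Let `T` be a finite rooted tree with root `r`, `v` a vertex and `T_v`
the subtree rooted at `v`.  If `u₁ ≠ u₂` are vertices of `T_v` with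
`d_T(v, u₁) = d_T(v, u₂)` and `Tr_T(u₁) ≠ Tr_T(u₂)`, then `Tr_{T_v}(u₁) ≠ Tr_{T_v}(u₂)`. -/
theorem subtree_transmissions_ne {V : Type*} [Fintype V]
    (T : SimpleGraph V) (hT : T.IsTree) (r v : V) (u₁ u₂ : V)
    (h₁ : u₁ ∈ T.subtreeSet r v) (h₂ : u₂ ∈ T.subtreeSet r v) (hne : u₁ ≠ u₂)
    (hd : T.dist v u₁ = T.dist v u₂)
    (htr : (∑ w, T.dist u₁ w) ≠ ∑ w, T.dist u₂ w) :
    T.subtreeTr r v u₁ h₁ ≠ T.subtreeTr r v u₂ h₂ :=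
  subtree_transmissions_ne_general T hT r v u₁ u₂ h₁ h₂ hd htr
end
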